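/- Let d ≥ 1 and l_1,…,l_d ≥ 1 be integers, and fix i ∈ {1,…,d}. Then for every function u : ℤ^d → ℂ and every x ∈ ℤ^d one has (P_0 A P_{e_i} A P_0 u)(x) = u(x) if x ∈ Λ(0) and x_i = l_i, and (P_0 A P_{e_i} A P_0 u)(x) = 0 otherwise. In other words, P_0 A P_{e_i} A P_0 is the operator of multiplication by the indicator function of the face {x ∈ Λ(0) : x_i = l_i}. -/
import Mathlib


open Finset

/-- The discrete Laplacian (hopping part) on `ℤ^d`:
`(A u)(x) = Σ_i (u(x+e_i) + u(x−e_i))`. -/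
noncomputable def Aop (d : ℕ) (u : (Fin d → ℤ) → ℂ) : (Fin d → ℤ) → ℂ :=
  fun x => ∑ i : Fin d, (u (x + Pi.single i 1) + u (x - Pi.single i 1))

/-- Multiplication by the indicator of the box
`Λ(n) = {x : n_i l_i < x_i ≤ (n_i+1) l_i for all i}`. -/
noncomputable def Pop (d : ℕ) (l : Fin d → ℕ) (n : Fin d → ℤ)
    (u : (Fin d → ℤ) → ℂ) : (Fin d → ℤ) → ℂ :=
  fun x => if ∀ i, n i * (l i : ℤ) < x i ∧ x i ≤ (n i + 1) * (l i : ℤ) then u x else 0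

/-- `P_0 A P_{e_i} A P_0` is multiplication by the indicator of the face
`{x ∈ Λ(0) : x_i = l_i}`. -/
theorem stmt_16 (d : ℕ) (hd : 1 ≤ d) (l : Fin d → ℕ) (hl : ∀ i, 1 ≤ l i) (i : Fin d)
    (u : (Fin d → ℤ) → ℂ) (x : Fin d → ℤ) :
    Pop d l 0 (Aop d (Pop d l (Pi.single i 1) (Aop d (Pop d l 0 u)))) x
      = if (∀ j, 0 < x j ∧ x j ≤ (l j : ℤ)) ∧ x i = (l i : ℤ) then u x else 0 := by
  by_cases h0 : ∀ j, 0 < x j ∧ x j ≤ (l j : ℤ)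
  · have houter : ∀ j, (0:Fin d → ℤ) j * (l j : ℤ) < x j ∧
        x j ≤ ((0:Fin d → ℤ) j + 1) * (l j : ℤ) := by
      intro j; simpa using h0 j
    set w := Pop d l 0 u with hw
    set v := Pop d l (Pi.single i 1) (Aop d w) with hv
    have hminus : ∀ j, v (x - Pi.single j 1) = 0 := by
      intro j
      rw [hv]; simp only [Pop]; rw [if_neg]
      intro h
      have h1 := (h i).1
      have h2 := (h0 i).2
      simp only [Pi.sub_apply, Pi.single_eq_same, Pi.single_apply, one_mul] at h1
      split at h1 <;> omega
    have hplus : ∀ j, j ≠ i → v (x + Pi.single j 1) = 0 := by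
      intro j hj
      rw [hv]; simp only [Pop]; rw [if_neg]
      intro h
      have h1 := (h i).1
      have h2 := (h0 i).2
      have hij : ¬ (i = j) := fun e => hj e.symm
      simp only [Pi.add_apply, Pi.single_eq_same, Pi.single_apply, one_mul,
        if_neg hij] at h1
      omega
    have P0z : ∀ y : Fin d → ℤ, (l i : ℤ) < y i → w y = 0 := by
      intro y hy
      rw [hw]; simp only [Pop]; rw [if_neg]
      intro h
      have h2 := (h i).2
      simp only [Pi.zero_apply, zero_add, one_mul] at h2
      omega
    have hwx : w x = u x := by
      rw [hw]; simp only [Pop]; rw [if_pos houter]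
    have key : v (x + Pi.single i 1) = if x i = (l i : ℤ) then u x else 0 := by
      by_cases hx : x i = (l i : ℤ)
      · rw [if_pos hx, hv]
        simp only [Pop, Aop]
        rw [if_pos]
        · rw [Finset.sum_eq_single_of_mem i (Finset.mem_univ i)]
          · have hp : w (x + Pi.single i 1 + Pi.single i 1) = 0 := by
              apply P0z
              simp only [Pi.add_apply, Pi.single_eq_same]
              omega
            have hm : x + Pi.single i 1 - Pi.single i 1 = x := by
              ext k; simp
            rw [hp, hm, zero_add, hwx]
          · intro j _ hj
            have hij : ¬ (i = j) := fun e => hj e.symm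
            have hp : w (x + Pi.single i 1 + Pi.single j 1) = 0 := by
              apply P0z
              simp only [Pi.add_apply, Pi.single_eq_same, Pi.single_apply, if_neg hij]
              omega
            have hm : w (x + Pi.single i 1 - Pi.single j 1) = 0 := by
              apply P0z
              simp only [Pi.sub_apply, Pi.add_apply, Pi.single_eq_same, Pi.single_apply,
                if_neg hij]
              omega
            rw [hp, hm, add_zero]
        · intro j
          by_cases hji : j = i
          · subst hji
            simp only [Pi.add_apply, Pi.single_eq_same, one_mul]
            have h1 := hl j
            constructor
            · omega
            · have : x j = (l j : ℤ) := hx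
              omega
          · have h0j := h0 j
            simp only [Pi.add_apply, Pi.single_eq_same, Pi.single_apply,
              if_neg hji, zero_mul, zero_add, one_mul, add_zero]
            exact h0j
      · rw [if_neg hx, hv]
        simp only [Pop]; rw [if_neg]
        intro h
        have h1 := (h i).1
        have h2 := (h0 i).2
        simp only [Pi.add_apply, Pi.single_eq_same, one_mul] at h1
        omega
    simp only [Pop, Aop]
    rw [if_pos houter,
      Finset.sum_eq_single_of_mem i (Finset.mem_univ i)
        (fun j _ hj => by rw [hplus j hj, hminus j, add_zero]),
      hminus i, add_zero, key]
    by_cases hx : x i = (l i : ℤ)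
    · rw [if_pos hx, if_pos ⟨h0, hx⟩]
    · rw [if_neg hx, if_neg (fun h => hx h.2)]
  · simp only [Pop]
    rw [if_neg, if_neg]
    · exact fun h => h0 h.1
    · intro h; exact h0 (by intro j; simpa using h j)
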